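/- Let T be a torus, Q a finite group acting on T by continuous automorphisms, and G = T ⋊ Q. Then every element of the identity component of the commutator subgroup of G can be written as a product of |Q| commutators of the form ⁅q₁,t₁⁆⋯⁅q_{|Q|},t_{|Q|}⁆ with qᵢ ∈ Q and tᵢ ∈ T. -/

import Mathlib

/-- A topological group is a (topological) torus if it is isomorphic, as a topological group,
to `(ℝ/ℤ)ⁿ` for some `n`. -/
def IsTopologicalTorus (T : Type*) [TopologicalSpace T] [Group T] : Prop :=
  ∃ (n : ℕ) (e : T ≃* Multiplicative (Fin n → AddCircle (1 : ℝ))),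
    Continuous e ∧ Continuous e.symm

/-- The topology on a semidirect product `N ⋊[φ] Q` of topological groups: the one induced
from the product topology via the canonical identification with `N × Q`. -/
instance SemidirectProduct.topologicalSpace {N Q : Type*} [Group N] [TopologicalSpace N]
    [Group Q] [TopologicalSpace Q] (φ : Q →* MulAut N) : TopologicalSpace (N ⋊[φ] Q) :=
  TopologicalSpace.induced (fun g => (g.left, g.right)) inferInstance

/-!
A torus is commutative, so in `G = T ⋊ Q` the commutator `⁅q, t⁆` is the element
`(φ q⁻¹ t)⁻¹ t` of `T`, and these elements for a fixed `q` form a subgroup. Let `S ≤ T` be the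
image of `(t_q)_q ↦ ∏_q (φ q⁻¹ t_q)⁻¹ t_q`; it contains every `t (φ q t)⁻¹`, so `Q` acts trivially
on `T ⧸ S` and `g ↦ g.left mod S` is a homomorphism from `G` to an abelian group. It kills
`[G, G]`, hence every `x ∈ [G, G]` has `x.left ∈ S`. On the other hand `Q` is discrete, so the
connected component of `[G, G]` lies in `T`, and there `x = x.left` is a product of `|Q|`
commutators `⁅q, t_q⁆`, one for each `q ∈ Q`.
-/

theorem IsTopologicalTorus.mul_comm {T : Type*} [TopologicalSpace T] [Group T]
    (hT : IsTopologicalTorus T) (a b : T) : a * b = b * a := by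
  obtain ⟨n, e, -, -⟩ := hT
  exact e.injective (by rw [map_mul, map_mul, _root_.mul_comm])

namespace SemidirectProduct

section Topology

variable {N Q : Type*} [Group N] [TopologicalSpace N] [Group Q] [TopologicalSpace Q]
  {φ : Q →* MulAut N}

theorem continuous_right : Continuous fun g : N ⋊[φ] Q => g.right :=
  continuous_snd.comp (continuous_induced_dom : Continuous fun g : N ⋊[φ] Q => (g.left, g.right))

theorem right_eq_one_of_mem_connectedComponent [DiscreteTopology Q] {H : Subgroup (N ⋊[φ] Q)}
    {x : H} (hx : x ∈ connectedComponent 1) : (x : N ⋊[φ] Q).right = 1 := by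
  have h := (continuous_right.comp continuous_subtype_val).image_connectedComponent_subset
    (1 : H) ⟨x, hx, rfl⟩
  simpa using h

end Topology

theorem inv_inr_mul_inv_inl_mul_inr_mul_inl {N Q : Type*} [Group N] [Group Q]
    {φ : Q →* MulAut N} (q : Q) (n : N) :
    (inr q : N ⋊[φ] Q)⁻¹ * (inl n)⁻¹ * inr q * inl n = inl ((φ q⁻¹ n)⁻¹ * n) := by
  ext <;> simp

section Commutative

variable {N Q : Type*} [CommGroup N] [Group Q] (φ : Q →* MulAut N)

/-- The commutator `⁅inr q, inl n⁆`, read in `N` (see `inv_inr_mul_inv_inl_mul_inr_mul_inl`). -/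
def commutatorInrHom (q : Q) : N →* N :=
  MonoidHom.mk' (fun n => (φ q⁻¹ n)⁻¹ * n) fun a b => by
    simp only [map_mul, mul_inv]
    exact mul_mul_mul_comm _ _ _ _

@[simp]
theorem commutatorInrHom_apply (q : Q) (n : N) : commutatorInrHom φ q n = (φ q⁻¹ n)⁻¹ * n :=
  rfl

variable [Fintype Q]

def prodCommutatorInrHom : (Q → N) →* N :=
  ∏ q, (commutatorInrHom φ q).comp (Pi.evalMonoidHom (fun _ => N) q)

theorem prodCommutatorInrHom_apply (t : Q → N) :
    prodCommutatorInrHom φ t = ∏ q, commutatorInrHom φ q (t q) := by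
  simp [prodCommutatorInrHom]

theorem commutatorInrHom_mem_range (q : Q) (n : N) :
    commutatorInrHom φ q n ∈ (prodCommutatorInrHom φ).range := by
  classical
  refine ⟨Pi.mulSingle q n, ?_⟩
  rw [prodCommutatorInrHom_apply, Fintype.prod_eq_single q fun r hr => by
    simp [Pi.mulSingle_eq_of_ne hr]]
  simp

theorem mk_apply_eq_mk (q : Q) (n : N) :
    (φ q n : N ⧸ (prodCommutatorInrHom φ).range) = n := by
  rw [QuotientGroup.eq]
  simpa using commutatorInrHom_mem_range φ q⁻¹ n

def leftModRange : N ⋊[φ] Q →* N ⧸ (prodCommutatorInrHom φ).range :=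
  MonoidHom.mk' (fun g => g.left) fun a b => by
    simp only [mul_left, QuotientGroup.mk_mul, mk_apply_eq_mk]

theorem left_mem_range_of_mem_commutator {x : N ⋊[φ] Q} (hx : x ∈ commutator (N ⋊[φ] Q)) :
    x.left ∈ (prodCommutatorInrHom φ).range :=
  (QuotientGroup.eq_one_iff _).mp (Abelianization.commutator_subset_ker (leftModRange φ) hx)

theorem list_prod_ofFn_commutator_inr_inl {n : ℕ} (e : Fin n ≃ Q) (t : Q → N) :
    (List.ofFn fun i =>
        ((inr (e i) : N ⋊[φ] Q)⁻¹ * (inl (t (e i)))⁻¹ * inr (e i) * inl (t (e i)))).prod =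
      inl (prodCommutatorInrHom φ t) := by
  have h : (List.ofFn fun i =>
        ((inr (e i) : N ⋊[φ] Q)⁻¹ * (inl (t (e i)))⁻¹ * inr (e i) * inl (t (e i)))) =
      (List.ofFn fun i => commutatorInrHom φ (e i) (t (e i))).map inl := by
    rw [List.map_ofFn]
    exact congrArg List.ofFn (funext fun i => inv_inr_mul_inv_inl_mul_inr_mul_inl _ _)
  rw [h, ← map_list_prod, List.prod_ofFn, Equiv.prod_comp e fun q => commutatorInrHom φ q (t q),
    prodCommutatorInrHom_apply]

theorem exists_eq_prod_commutators_of_mem_commutator {x : N ⋊[φ] Q}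
    (hx : x ∈ commutator (N ⋊[φ] Q)) (hright : x.right = 1) :
    ∃ (qs : Fin (Fintype.card Q) → Q) (ts : Fin (Fintype.card Q) → N),
      x = (List.ofFn fun i =>
        ((inr (qs i) : N ⋊[φ] Q)⁻¹ * (inl (ts i))⁻¹ * inr (qs i) * inl (ts i))).prod := by
  obtain ⟨t, ht⟩ := left_mem_range_of_mem_commutator φ hx
  refine ⟨(Fintype.equivFin Q).symm, t ∘ (Fintype.equivFin Q).symm, ?_⟩
  rw [Function.comp_def, list_prod_ofFn_commutator_inr_inl, ht]
  exact SemidirectProduct.ext rfl hright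

end Commutative

end SemidirectProduct

open SemidirectProduct in
theorem mem_identityComponent_commutator_eq_prod_card_commutators_general
    {T : Type*} [Group T] [TopologicalSpace T]
    (hT : IsTopologicalTorus T)
    {Q : Type*} [Group Q] [Fintype Q] [TopologicalSpace Q] [DiscreteTopology Q]
    (φ : Q →* MulAut T)
    (x : T ⋊[φ] Q) (hx : x ∈ commutator (T ⋊[φ] Q))
    (hx0 : (⟨x, hx⟩ : commutator (T ⋊[φ] Q)) ∈ connectedComponent 1) :
    ∃ (qs : Fin (Fintype.card Q) → Q) (ts : Fin (Fintype.card Q) → T),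
      x = (List.ofFn fun i =>
        ((inr (qs i) : T ⋊[φ] Q)⁻¹ * (inl (ts i))⁻¹ * inr (qs i) * inl (ts i))).prod := by
  let : CommGroup T := { ‹Group T› with mul_comm := hT.mul_comm }
  exact exists_eq_prod_commutators_of_mem_commutator φ hx
    (right_eq_one_of_mem_connectedComponent hx0)

open SemidirectProduct in
/-- In `G = T ⋊ Q` with `T` a torus and `Q` finite acting continuously, every element of the
identity component of the commutator subgroup of `G` is a product of `|Q|` commutators
`⁅q₁,t₁⁆⋯⁅q_{|Q|},t_{|Q|}⁆` with `qᵢ ∈ Q`, `tᵢ ∈ T`.  (Here `⁅g,h⁆ = g⁻¹h⁻¹gh`.) -/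
theorem mem_identityComponent_commutator_eq_prod_card_commutators
    {T : Type*} [Group T] [TopologicalSpace T] [IsTopologicalGroup T]
    (hT : IsTopologicalTorus T)
    {Q : Type*} [Group Q] [Fintype Q] [TopologicalSpace Q] [DiscreteTopology Q]
    (φ : Q →* MulAut T) (hφ : ∀ q : Q, Continuous (φ q))
    (x : T ⋊[φ] Q) (hx : x ∈ commutator (T ⋊[φ] Q))
    (hx0 : (⟨x, hx⟩ : commutator (T ⋊[φ] Q)) ∈ connectedComponent 1) :
    ∃ (qs : Fin (Fintype.card Q) → Q) (ts : Fin (Fintype.card Q) → T),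
      x = (List.ofFn fun i =>
        ((inr (qs i) : T ⋊[φ] Q)⁻¹ * (inl (ts i))⁻¹ * inr (qs i) * inl (ts i))).prod :=
  mem_identityComponent_commutator_eq_prod_card_commutators_general hT φ x hx hx0
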